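/- Suppose $(\alpha_n)$ and $(\beta_n)$ satisfy $|\alpha_n| \le A_1 (n-1)^{-3/2}$ and $|\beta_n| \le B_1 (n-1)^{-3/2}$ for $n \ge 2$. Then for integers $k \ge 0$ and $M \ge 3$, $\left|\mu_k - \sum_{m=0}^{M}\sum_{\ell=m}^{k+m}\alpha_{k+2m-\ell}\beta_{\ell}A_{m,k+2m,\ell}\right| \le \frac{4A_1B_1(k+2)}{(k+2M-2)\left(2\left(\sqrt{(M-2)(k+M)}+M-1\right)+k\right)}$, where $\mu_k = \sum_{m=0}^{\infty}\sum_{\ell=m}^{k+m}\alpha_{k+2m-\ell}\beta_{\ell}A_{m,k+2m,\ell}$. -/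

import Mathlib

open Finset MeasureTheory

/-- Rising factorial (Pochhammer symbol) `(a)_r`. -/
noncomputable def risingFac (a : ℝ) : ℕ → ℝ
  | 0 => 1
  | n + 1 => risingFac a n * (a + n)

/-- The coefficient `A_{jkl}` from the Legendre linearization formula. -/
noncomputable def Acoef (j k l : ℕ) : ℝ :=
  (risingFac (1/2) j * risingFac (1/2) (k - l - j) * risingFac (1/2) (l - j)
      * (Nat.factorial (k - j)))
    / (Nat.factorial j * Nat.factorial (k - l - j) * Nat.factorial (l - j)
      * risingFac (3/2) (k - j))
    * (2 * ((k : ℝ) - 2 * j) + 1)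

/-- The `n`th Legendre polynomial evaluated at `x`, via Rodrigues' formula. -/
noncomputable def legP (n : ℕ) (x : ℝ) : ℝ :=
  (1 / (2 ^ n * Nat.factorial n)) *
    (Polynomial.derivative^[n] ((Polynomial.X ^ 2 - 1 : Polynomial ℝ) ^ n)).eval x

/-- `f` is absolutely continuous on `[a, b]`. -/
def AbsCont (f : ℝ → ℝ) (a b : ℝ) : Prop :=
  ∀ ε > 0, ∃ δ > 0, ∀ n : ℕ, ∀ u v : Fin n → ℝ,
    (∀ i, a ≤ u i ∧ u i ≤ v i ∧ v i ≤ b) →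
    (∀ i j, i ≠ j → Set.Ioo (u i) (v i) ∩ Set.Ioo (u j) (v j) = ∅) →
    ∑ i, (v i - u i) < δ → ∑ i, |f (v i) - f (u i)| < ε

/-!
`|A_{m,k+2m,l}| ≤ 1` because `u n = (1/2)_n / n!` has increasing consecutive ratios
`(n + 1/2)/(n + 1)`, hence is supermultiplicative. For `m ≥ 3` the `m`-th inner sum is then at
most `A₁B₁ ∑_l ((c - l)(l - 1))^{-3/2}` with `c = k + 2m - 1`; this summand decreases and then
increases in `l`, so the sum is dominated by its integral over `[m - 1, k + m + 1]`, which is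
`4(k + 2)/((k + 2m - 2)² √((m - 2)(k + m)))`. This bound decreases in `m`, so the tail `m > M`
is dominated by its integral over `[M, ∞)`, and an explicit primitive evaluates it.
-/

open intervalIntegral in
lemma sum_Ioo_le_integral_of_antitoneOn_of_monotoneOn {f : ℝ → ℝ} {a p b : ℕ}
    (hap : a ≤ p) (hpb : p < b) (hanti : AntitoneOn f (Set.Icc a p))
    (hmono : MonotoneOn f (Set.Icc (p + 1 : ℕ) b))
    (hgap : IntervalIntegrable f volume p (p + 1 : ℕ))
    (hgap_nonneg : ∀ x ∈ Set.Icc (p : ℝ) (p + 1 : ℕ), 0 ≤ f x) :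
    ∑ i ∈ Ioo a b, f i ≤ ∫ x in (a : ℝ)..b, f x := by
  have hsplit : ∑ i ∈ Ioo a b, f i
      = ∑ i ∈ Ico a p, f ↑(i + 1) + ∑ i ∈ Ico (p + 1) b, f i := by
    rw [← Finset.Ico_add_one_left_eq_Ioo,
      ← sum_Ico_consecutive _ (by omega : a + 1 ≤ p + 1) hpb, sum_Ico_add' (fun i : ℕ => f i)]
  have hanti_int : IntervalIntegrable f volume a p :=
    (Set.uIcc_of_le ((Nat.cast_le (α := ℝ)).2 hap) ▸ hanti).intervalIntegrable
  have hmono_int : IntervalIntegrable f volume (p + 1 : ℕ) b :=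
    (Set.uIcc_of_le ((Nat.cast_le (α := ℝ)).2 hpb) ▸ hmono).intervalIntegrable
  have hmid : 0 ≤ ∫ x in (p : ℝ)..(p + 1 : ℕ), f x :=
    integral_nonneg (by push_cast; linarith) hgap_nonneg
  rw [hsplit, ← integral_add_adjacent_intervals (hanti_int.trans hgap) hmono_int,
    ← integral_add_adjacent_intervals hanti_int hgap]
  linarith [hanti.sum_le_integral_Ico hap, hmono.sum_le_integral_Ico hpb]

lemma abs_tsum_sub_sum_range_le {g : ℕ → ℝ} {N : ℕ} {R : ℝ}
    (h : ∀ n, ∑ i ∈ range n, |g (i + N)| ≤ R) :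
    |∑' i, g i - ∑ i ∈ range N, g i| ≤ R := by
  have htail : Summable fun i => |g (i + N)| := summable_of_sum_range_le (fun _ => abs_nonneg _) h
  rw [← (summable_nat_add_iff N).1 htail.of_abs |>.sum_add_tsum_nat_add N, add_sub_cancel_left]
  exact (norm_tsum_le_tsum_norm (f := fun i => g (i + N)) htail).trans
    (Real.tsum_le_of_sum_range_le (fun _ => abs_nonneg _) h)

lemma abs_mul_mul_le_mul_rpow_neg {x y w a b A B p : ℝ} (ha : 0 ≤ a) (hb : 0 ≤ b)
    (hx : |x| ≤ A / a ^ p) (hy : |y| ≤ B / b ^ p) (hw : |w| ≤ 1) :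
    |x * y * w| ≤ A * B * (a * b) ^ (-p) :=
  calc |x * y * w| = |x| * |y| * |w| := by rw [abs_mul, abs_mul]
    _ ≤ A / a ^ p * (B / b ^ p) * 1 :=
        mul_le_mul (mul_le_mul hx hy (abs_nonneg _) ((abs_nonneg _).trans hx)) hw (abs_nonneg _)
          (mul_nonneg ((abs_nonneg _).trans hx) ((abs_nonneg _).trans hy))
    _ = A * B * (a * b) ^ (-p) := by
        rw [Real.rpow_neg (mul_nonneg ha hb), Real.mul_rpow ha hb, mul_inv]
        ring

lemma risingFac_pos {a : ℝ} (ha : 0 < a) (n : ℕ) : 0 < risingFac a n := by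
  induction n with
  | zero => simp [risingFac]
  | succ n ih => exact mul_pos ih (by positivity)

lemma risingFac_add_one_mul (a : ℝ) (n : ℕ) :
    risingFac (a + 1) n * a = risingFac a n * (a + n) := by
  induction n with
  | zero => simp [risingFac]
  | succ n ih =>
    simp only [risingFac]
    push_cast
    linear_combination (a + 1 + n) * ih

noncomputable def halfRisingRatio (n : ℕ) : ℝ := risingFac (1 / 2) n / n.factorial

lemma halfRisingRatio_pos (n : ℕ) : 0 < halfRisingRatio n :=
  div_pos (risingFac_pos (by norm_num) n) (by positivity)

lemma halfRisingRatio_succ (n : ℕ) :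
    halfRisingRatio (n + 1) = halfRisingRatio n * ((1 / 2 + n) / (n + 1)) := by
  simp only [halfRisingRatio, risingFac, Nat.factorial_succ, Nat.cast_mul, Nat.cast_succ]
  field_simp

lemma halfRisingRatio_mul_le (a b : ℕ) :
    halfRisingRatio a * halfRisingRatio b ≤ halfRisingRatio (a + b) := by
  induction a with
  | zero => simp [halfRisingRatio, risingFac]
  | succ a ih =>
    have hq : ((1 : ℝ) / 2 + a) / (a + 1) ≤ (1 / 2 + ↑(a + b)) / (↑(a + b) + 1) := by
      rw [div_le_div_iff₀ (by positivity) (by positivity)]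
      push_cast
      nlinarith [(b.cast_nonneg : (0 : ℝ) ≤ b)]
    rw [Nat.add_right_comm, halfRisingRatio_succ, halfRisingRatio_succ, mul_right_comm]
    exact mul_le_mul ih hq (by positivity) (halfRisingRatio_pos _).le

lemma Acoef_eq (k m l : ℕ) :
    Acoef m (k + 2 * m) l = halfRisingRatio m * halfRisingRatio (k + m - l)
      * halfRisingRatio (l - m) / halfRisingRatio (k + m)
      * ((2 * k + 1) / (2 * (k + m : ℕ) + 1)) := by
  have h32 : risingFac (3 / 2) (k + m) = (2 * (k + m : ℕ) + 1) * risingFac (1 / 2) (k + m) := by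
    have := risingFac_add_one_mul (1 / 2) (k + m)
    norm_num at this
    push_cast
    linear_combination 2 * this
  have : risingFac (1 / 2) (k + m) ≠ 0 := (risingFac_pos (by norm_num) _).ne'
  simp only [Acoef, halfRisingRatio, show k + 2 * m - l - m = k + m - l by omega,
    show k + 2 * m - m = k + m by omega, h32]
  push_cast
  field_simp
  ring

lemma abs_Acoef_le_one (k m l : ℕ) (hml : m ≤ l) (hlk : l ≤ k + m) :
    |Acoef m (k + 2 * m) l| ≤ 1 := by
  have hpos := halfRisingRatio_pos
  have hprod : halfRisingRatio m * halfRisingRatio (k + m - l) * halfRisingRatio (l - m)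
      ≤ halfRisingRatio (k + m) :=
    calc _ ≤ halfRisingRatio (m + (k + m - l)) * halfRisingRatio (l - m) :=
          mul_le_mul_of_nonneg_right (halfRisingRatio_mul_le _ _) (hpos _).le
      _ ≤ halfRisingRatio (k + m) := by convert halfRisingRatio_mul_le _ _ using 2; omega
  have hratio_nonneg : 0 ≤ halfRisingRatio m * halfRisingRatio (k + m - l)
      * halfRisingRatio (l - m) / halfRisingRatio (k + m) :=
    div_nonneg (mul_nonneg (mul_nonneg (hpos _).le (hpos _).le) (hpos _).le) (hpos _).le
  have hk : (2 * k + 1 : ℝ) / (2 * (k + m : ℕ) + 1) ≤ 1 := by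
    rw [div_le_one (by positivity)]; push_cast; linarith [(m.cast_nonneg : (0 : ℝ) ≤ m)]
  rw [Acoef_eq, abs_of_nonneg (mul_nonneg hratio_nonneg (by positivity))]
  exact mul_le_one₀ (div_le_one_of_le₀ hprod (hpos _).le) (by positivity) hk

noncomputable def innerWeight (c x : ℝ) : ℝ := ((c - x) * (x - 1)) ^ (-(3 / 2 : ℝ))

lemma innerWeight_antitoneOn (c : ℝ) : AntitoneOn (innerWeight c) (Set.Ioc 1 ((c + 1) / 2)) := by
  rintro x ⟨hx1, hxc⟩ y ⟨hy1, hyc⟩ hxy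
  exact Real.rpow_le_rpow_of_nonpos (by nlinarith) (by nlinarith) (by norm_num)

lemma innerWeight_monotoneOn (c : ℝ) : MonotoneOn (innerWeight c) (Set.Ico ((c + 1) / 2) c) := by
  rintro x ⟨hx1, hxc⟩ y ⟨hy1, hyc⟩ hxy
  exact Real.rpow_le_rpow_of_nonpos (by nlinarith) (by nlinarith) (by norm_num)

lemma continuousOn_innerWeight (c : ℝ) : ContinuousOn (innerWeight c) (Set.Ioo 1 c) :=
  ContinuousOn.rpow_const (by fun_prop) fun x ⟨hx1, hxc⟩ => Or.inl (by nlinarith)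

lemma hasDerivAt_innerWeight_primitive {c x : ℝ} (hx1 : 1 < x) (hxc : x < c) :
    HasDerivAt (fun y => 2 * (2 * y - c - 1) / (c - 1) ^ 2 * ((c - y) * (y - 1)) ^ (-(1 / 2 : ℝ)))
      (innerWeight c x) x := by
  have hP : 0 < (c - x) * (x - 1) := by nlinarith
  have hc : c - 1 ≠ 0 := by linarith
  have hlin : HasDerivAt (fun y => 2 * (2 * y - c - 1) / (c - 1) ^ 2) (4 / (c - 1) ^ 2) x :=
    ((((hasDerivAt_id' x).const_mul 2).sub_const c).sub_const 1 |>.const_mul 2 |>.div_const _)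
      |>.congr_deriv (by ring)
  have hpoly : HasDerivAt (fun y => (c - y) * (y - 1)) (c + 1 - 2 * x) x :=
    ((hasDerivAt_id' x).const_sub c).mul ((hasDerivAt_id' x).sub_const 1) |>.congr_deriv (by ring)
  refine (hlin.mul (hpoly.rpow_const (p := -(1 / 2 : ℝ)) (Or.inl hP.ne'))).congr_deriv ?_
  -- `P ^ (-1/2) = P * P ^ (-3/2)` and `4 P + (2x - c - 1)² = (c - 1)²`.
  have hsplit : ((c - x) * (x - 1)) ^ (-(1 / 2 : ℝ)) = (c - x) * (x - 1) * innerWeight c x := by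
    rw [innerWeight, ← Real.rpow_one_add' hP.le (by norm_num)]; norm_num
  rw [show -(1 / 2 : ℝ) - 1 = -(3 / 2) by norm_num, ← innerWeight, hsplit]
  field_simp
  ring

lemma integral_innerWeight {a c : ℝ} (ha : 1 < a) (hac : 2 * a ≤ c + 1) :
    ∫ x in a..(c + 1 - a), innerWeight c x
      = 4 * (c + 1 - 2 * a) / ((c - 1) ^ 2 * √((c - a) * (a - 1))) := by
  have hIcc : Set.uIcc a (c + 1 - a) ⊆ Set.Ioo 1 c := by
    rw [Set.uIcc_of_le (by linarith)]
    exact Set.Icc_subset_Ioo ha (by linarith)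
  rw [intervalIntegral.integral_eq_sub_of_hasDerivAt
    (fun x hx => hasDerivAt_innerWeight_primitive (hIcc hx).1 (hIcc hx).2)
    ((continuousOn_innerWeight c).mono hIcc).intervalIntegrable,
    show (c - (c + 1 - a)) * (c + 1 - a - 1) = (c - a) * (a - 1) by ring,
    Real.rpow_neg (by nlinarith), ← Real.sqrt_eq_rpow, div_eq_mul_inv _ (_ * _), mul_inv]
  ring

noncomputable def outerWeight (k x : ℝ) : ℝ :=
  1 / ((k + 2 * x - 2) ^ 2 * √((x - 2) * (k + x)))

lemma sum_innerWeight_le (k m : ℕ) (hm : 3 ≤ m) :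
    ∑ l ∈ Icc m (k + m), innerWeight (k + 2 * m - 1) l ≤ 4 * (k + 2) * outerWeight k m := by
  set c : ℝ := k + 2 * m - 1
  -- the minimum point `(c + 1) / 2` of the weight lies in `[p, p + 1]`
  set p := (k + 2 * m) / 2
  have hm' : (3 : ℝ) ≤ m := by exact_mod_cast hm
  have hp_le : (2 * p : ℝ) ≤ k + 2 * m := by exact_mod_cast Nat.mul_div_le (k + 2 * m) 2
  have hp_ge : (k + 2 * m : ℝ) ≤ 2 * p + 2 := by norm_cast; omega
  have hcast_a : ((m - 1 : ℕ) : ℝ) = m - 1 := by rw [Nat.cast_sub (by omega)]; simp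
  have hcast_b : ((k + m + 1 : ℕ) : ℝ) = c + 1 - (m - 1) := by push_cast; ring
  have hgap : Set.Icc (p : ℝ) (p + 1 : ℕ) ⊆ Set.Ioo 1 c := by
    push_cast; exact Set.Icc_subset_Ioo (by linarith) (by linarith)
  calc ∑ l ∈ Icc m (k + m), innerWeight c l
      = ∑ l ∈ Ioo (m - 1) (k + m + 1), innerWeight c l := by
        congr 1; ext; simp only [mem_Icc, mem_Ioo]; omega
    _ ≤ ∫ x in ((m - 1 : ℕ) : ℝ)..(k + m + 1 : ℕ), innerWeight c x := by
        refine sum_Ioo_le_integral_of_antitoneOn_of_monotoneOn (by omega) (by omega)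
          ((innerWeight_antitoneOn c).mono ?_) ((innerWeight_monotoneOn c).mono ?_)
          ((continuousOn_innerWeight c).mono ((Set.uIcc_of_le (by simp)).trans_subset hgap)
            |>.intervalIntegrable)
          fun x hx => Real.rpow_nonneg (mul_nonneg (by linarith [(hgap hx).2])
            (by linarith [(hgap hx).1])) _
        · rw [hcast_a]; exact Set.Icc_subset_Ioc (by linarith) (by linarith)
        · rw [hcast_b]; push_cast; exact Set.Icc_subset_Ico (by linarith) (by linarith)
    _ = 4 * (k + 2) * outerWeight k m := by
        rw [hcast_a, hcast_b, integral_innerWeight (by linarith) (by linarith), outerWeight,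
          show c + 1 - 2 * (m - 1) = k + 2 by ring, show c - 1 = k + 2 * m - 2 by ring,
          show (c - (m - 1)) * (m - 1 - 1) = (m - 2) * (k + m) by ring]
        ring

lemma outerWeight_antitoneOn {k : ℝ} (hk : 0 ≤ k) : AntitoneOn (outerWeight k) (Set.Ioi 2) := by
  rintro x (hx : 2 < x) y (hy : 2 < y) hxy
  have hQx : 0 < (x - 2) * (k + x) := by nlinarith
  have hs := Real.sqrt_pos.2 hQx
  have hD : 0 < k + 2 * x - 2 := by linarith
  exact one_div_le_one_div_of_le (by positivity) <| mul_le_mul (by nlinarith)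
    (Real.sqrt_le_sqrt (by nlinarith)) hs.le (by positivity)

noncomputable def outerWeightPrimitive (k x : ℝ) : ℝ :=
  2 * √((x - 2) * (k + x)) / ((k + 2) ^ 2 * (k + 2 * x - 2))

lemma hasDerivAt_outerWeightPrimitive {k x : ℝ} (hk : 0 ≤ k) (hx : 2 < x) :
    HasDerivAt (outerWeightPrimitive k) (outerWeight k x) x := by
  have hQ : 0 < (x - 2) * (k + x) := by nlinarith
  have hD : 0 < k + 2 * x - 2 := by linarith
  have hs := Real.sqrt_pos.2 hQ
  have hs2 := Real.sq_sqrt hQ.le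
  have hpoly : HasDerivAt (fun y => (y - 2) * (k + y)) (k + 2 * x - 2) x :=
    ((hasDerivAt_id' x).sub_const 2).mul ((hasDerivAt_id' x).const_add k) |>.congr_deriv (by ring)
  have hlin : HasDerivAt (fun y => (k + 2) ^ 2 * (k + 2 * y - 2)) ((k + 2) ^ 2 * 2) x :=
    (((hasDerivAt_id' x).const_mul 2).const_add k).sub_const 2 |>.const_mul _
      |>.congr_deriv (by ring)
  refine ((hpoly.sqrt hQ.ne').const_mul 2 |>.div hlin (by positivity)).congr_deriv ?_
  rw [outerWeight]
  field_simp
  -- `(k + 2x - 2)² - 4 (x - 2)(k + x) = (k + 2)²`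
  linear_combination (-4) * hs2

lemma outerWeightPrimitive_le {k x : ℝ} (hk : 0 ≤ k) (hx : 2 ≤ x) :
    outerWeightPrimitive k x ≤ 1 / (k + 2) ^ 2 := by
  have hQ : 0 ≤ (x - 2) * (k + x) := by nlinarith
  have hs2 := Real.sq_sqrt hQ
  have hs := Real.sqrt_nonneg ((x - 2) * (k + x))
  rw [outerWeightPrimitive, div_le_div_iff₀ (by nlinarith) (by positivity)]
  nlinarith [sq_nonneg (k + 2)]

lemma one_div_sq_sub_outerWeightPrimitive {k x : ℝ} (hk : 0 ≤ k) (hx : 2 ≤ x) :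
    1 / (k + 2) ^ 2 - outerWeightPrimitive k x
      = 1 / ((k + 2 * x - 2) * (2 * (√((x - 2) * (k + x)) + x - 1) + k)) := by
  have hS2 := Real.sq_sqrt (show 0 ≤ (x - 2) * (k + x) by nlinarith)
  have hS := Real.sqrt_nonneg ((x - 2) * (k + x))
  have hD : 0 < k + 2 * x - 2 := by linarith
  rw [outerWeightPrimitive, div_sub_div _ _ (by positivity) (by positivity),
    div_eq_div_iff (by positivity) (by nlinarith)]
  -- `(D - 2S)(D + 2S) = (k + 2)²` for `D = k + 2x - 2`, `S² = (x - 2)(k + x)`.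
  linear_combination (-4 * (k + 2) ^ 2 * (k + 2 * x - 2)) * hS2

lemma sum_outerWeight_le {k x₀ : ℝ} (hk : 0 ≤ k) (hx₀ : 2 < x₀) (n : ℕ) :
    ∑ i ∈ range n, outerWeight k (x₀ + ↑(i + 1))
      ≤ 1 / ((k + 2 * x₀ - 2) * (2 * (√((x₀ - 2) * (k + x₀)) + x₀ - 1) + k)) := by
  have hle : x₀ ≤ x₀ + n := le_add_of_nonneg_right n.cast_nonneg
  have hIoi : Set.uIcc x₀ (x₀ + n) ⊆ Set.Ioi 2 :=
    fun x hx => hx₀.trans_le (Set.uIcc_of_le hle ▸ hx).1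
  have hanti := (outerWeight_antitoneOn hk).mono hIoi
  calc _ ≤ ∫ x in x₀..x₀ + n, outerWeight k x :=
        (Set.uIcc_of_le hle ▸ hanti).sum_le_integral
    _ = outerWeightPrimitive k (x₀ + n) - outerWeightPrimitive k x₀ :=
        intervalIntegral.integral_eq_sub_of_hasDerivAt
          (fun x hx => hasDerivAt_outerWeightPrimitive hk (hIoi hx)) hanti.intervalIntegrable
    _ ≤ 1 / (k + 2) ^ 2 - outerWeightPrimitive k x₀ := by
        linarith [outerWeightPrimitive_le hk (hx₀.le.trans hle)]
    _ = _ := one_div_sq_sub_outerWeightPrimitive hk hx₀.le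

noncomputable def muSummand (α β : ℕ → ℝ) (k m : ℕ) : ℝ :=
  ∑ l ∈ Icc m (k + m), α (k + 2 * m - l) * β l * Acoef m (k + 2 * m) l

lemma abs_muSummand_le {α β : ℕ → ℝ} {A1 B1 : ℝ} (hA : 0 ≤ A1) (hB : 0 ≤ B1)
    (hα : ∀ n : ℕ, 2 ≤ n → |α n| ≤ A1 / ((n : ℝ) - 1) ^ ((3 : ℝ) / 2))
    (hβ : ∀ n : ℕ, 2 ≤ n → |β n| ≤ B1 / ((n : ℝ) - 1) ^ ((3 : ℝ) / 2))
    (k m : ℕ) (hm : 3 ≤ m) :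
    |muSummand α β k m| ≤ 4 * A1 * B1 * (k + 2) * outerWeight k m :=
  calc |muSummand α β k m|
      ≤ ∑ l ∈ Icc m (k + m), |α (k + 2 * m - l) * β l * Acoef m (k + 2 * m) l| :=
        abs_sum_le_sum_abs _ _
    _ ≤ ∑ l ∈ Icc m (k + m), A1 * B1 * innerWeight (k + 2 * m - 1) l := by
        refine sum_le_sum fun l hl => ?_
        obtain ⟨hml, hlk⟩ := mem_Icc.1 hl
        have hl3 : (3 : ℝ) ≤ l := by exact_mod_cast hm.trans hml
        have hlk' : (l : ℝ) + 3 ≤ k + 2 * m := by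
          exact_mod_cast (by omega : l + 3 ≤ k + 2 * m)
        have hcast : ((k + 2 * m - l : ℕ) : ℝ) - 1 = k + 2 * m - 1 - l := by
          rw [Nat.cast_sub (by omega)]; push_cast; ring
        exact abs_mul_mul_le_mul_rpow_neg (by linarith) (by linarith)
          (hcast ▸ hα _ (by omega)) (hβ l (by omega)) (abs_Acoef_le_one k m l hml hlk)
    _ = A1 * B1 * ∑ l ∈ Icc m (k + m), innerWeight (k + 2 * m - 1) l := (mul_sum ..).symm
    _ ≤ A1 * B1 * (4 * (k + 2) * outerWeight k m) := by gcongr; exact sum_innerWeight_le k m hm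
    _ = 4 * A1 * B1 * (k + 2) * outerWeight k m := by ring

theorem coefficient_truncation_error_general (α β : ℕ → ℝ) (A1 B1 : ℝ)
    (hα : ∀ n : ℕ, 2 ≤ n → |α n| ≤ A1 / ((n : ℝ) - 1) ^ ((3 : ℝ) / 2))
    (hβ : ∀ n : ℕ, 2 ≤ n → |β n| ≤ B1 / ((n : ℝ) - 1) ^ ((3 : ℝ) / 2))
    (k M : ℕ) (hM : 3 ≤ M) :
    |(∑' m : ℕ, ∑ l ∈ Finset.Icc m (k + m),
        α (k + 2 * m - l) * β l * Acoef m (k + 2 * m) l)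
      - ∑ m ∈ Finset.range (M + 1), ∑ l ∈ Finset.Icc m (k + m),
          α (k + 2 * m - l) * β l * Acoef m (k + 2 * m) l|
      ≤ 4 * A1 * B1 * ((k : ℝ) + 2) /
          (((k : ℝ) + 2 * (M : ℝ) - 2) *
            (2 * (Real.sqrt (((M : ℝ) - 2) * ((k : ℝ) + (M : ℝ))) + (M : ℝ) - 1) + (k : ℝ))) := by
  have hA : 0 ≤ A1 := ((abs_nonneg _).trans (hα 2 le_rfl)).trans_eq (by norm_num)
  have hB : 0 ≤ B1 := ((abs_nonneg _).trans (hβ 2 le_rfl)).trans_eq (by norm_num)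
  have hM' : (3 : ℝ) ≤ M := by exact_mod_cast hM
  refine abs_tsum_sub_sum_range_le (g := muSummand α β k) fun n => ?_
  calc ∑ i ∈ range n, |muSummand α β k (i + (M + 1))|
      ≤ ∑ i ∈ range n, 4 * A1 * B1 * (k + 2) * outerWeight k (M + ↑(i + 1)) := by
        refine sum_le_sum fun i _ => ?_
        rw [show (M : ℝ) + ↑(i + 1) = ↑(i + (M + 1)) by push_cast; ring]
        exact abs_muSummand_le hA hB hα hβ k _ (by omega)
    _ = 4 * A1 * B1 * (k + 2) * ∑ i ∈ range n, outerWeight k (M + ↑(i + 1)) :=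
        (mul_sum ..).symm
    _ ≤ _ := by
        rw [← mul_one_div]
        gcongr
        exact sum_outerWeight_le k.cast_nonneg (by linarith) n

/-- truncation error bound for the coefficient series. -/
theorem coefficient_truncation_error (α β : ℕ → ℝ) (A1 B1 : ℝ) (hA : 0 < A1) (hB : 0 < B1)
    (hα : ∀ n : ℕ, 2 ≤ n → |α n| ≤ A1 / ((n : ℝ) - 1) ^ ((3 : ℝ) / 2))
    (hβ : ∀ n : ℕ, 2 ≤ n → |β n| ≤ B1 / ((n : ℝ) - 1) ^ ((3 : ℝ) / 2))
    (k M : ℕ) (hM : 3 ≤ M) :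
    |(∑' m : ℕ, ∑ l ∈ Finset.Icc m (k + m),
        α (k + 2 * m - l) * β l * Acoef m (k + 2 * m) l)
      - ∑ m ∈ Finset.range (M + 1), ∑ l ∈ Finset.Icc m (k + m),
          α (k + 2 * m - l) * β l * Acoef m (k + 2 * m) l|
      ≤ 4 * A1 * B1 * ((k : ℝ) + 2) /
          (((k : ℝ) + 2 * (M : ℝ) - 2) *
            (2 * (Real.sqrt (((M : ℝ) - 2) * ((k : ℝ) + (M : ℝ))) + (M : ℝ) - 1) + (k : ℝ))) :=
  coefficient_truncation_error_general α β A1 B1 hα hβ k M hM
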